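/- arXiv:2305.02447 — 3 statements merged into one kernel-verified Lean document; each statement's English description precedes it below -/
import Mathlib

section
/- Let M be a hypersurface in a Riemannian manifold N admitting a torse-forming vector field P with generating form ω. With P = φη + V as above, the gradient of φ on M satisfies grad φ = φ ω♯_M − A(V), where ω♯_M is the tangential part of the metric dual of ω. -/
/-!
Differentiate `φ = ⟨P, η⟩` along a tangent field `X`: metric compatibility gives
`X(φ) = ⟨∇̄_X P, η⟩ + ⟨P, ∇̄_X η⟩`. The torse-forming equation turns the first term into
`ω(X) φ`, and the Weingarten formula with self-adjointness of `A` turns the second into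
`-⟨A V, X⟩`. Hence `grad φ` and `φ ω♯_M - A V` agree against every tangent vector; both are
tangent, so they also agree against `η`, and nondegeneracy of the metric identifies them.
-/
theorem LinearMap.SeparatingLeft.eq_of_agree_on_unit_and_orthogonal {R W : Type*} [CommRing R]
    [AddCommGroup W] [Module R W] {B : W →ₗ[R] W →ₗ[R] R} (hB : B.SeparatingLeft) {n x y : W}
    (hn : B n n = 1) (hxn : B x n = B y n) (h : ∀ w, B w n = 0 → B x w = B y w) : x = y := by
  refine sub_eq_zero.mp (hB _ fun u => ?_)
  have hperp : B (u - B u n • n) n = 0 := by simp [hn]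
  calc B (x - y) u = B (x - y) (B u n • n + (u - B u n • n)) := by rw [add_sub_cancel]
    _ = B u n * (B x n - B y n) + (B x (u - B u n • n) - B y (u - B u n • n)) := by
      rw [map_add, map_smul, smul_eq_mul, map_sub, LinearMap.sub_apply, LinearMap.sub_apply]
    _ = 0 := by rw [hxn, h _ hperp]; ring

theorem dop_normalComponent_of_torseForming {M W : Type*} [AddCommGroup W] [Module ℝ W]
    {g : M → W →ₗ[ℝ] W →ₗ[ℝ] ℝ} {nabla : (M → W) → (M → W) → (M → W)}
    {Dop : (M → W) → (M → ℝ) → (M → ℝ)} {η P V X : M → W} {φ μ : M → ℝ}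
    {ω : M → W →ₗ[ℝ] ℝ} {A : (M → W) → (M → W)} {p : M}
    (hsym : ∀ v w, g p v w = g p w v)
    (hφ : φ = fun q => g q (P q) (η q))
    (hPdec : P p = φ p • η p + V p)
    (hX : g p (X p) (η p) = 0)
    (hAX : g p (A X p) (η p) = 0)
    (hAsym : g p (A X p) (V p) = g p (X p) (A V p))
    (hWein : nabla X η p = -A X p)
    (hTF : nabla X P p = μ p • X p + ω p (X p) • P p)
    (hcompat : Dop X (fun q => g q (P q) (η q)) p
      = g p (nabla X P p) (η p) + g p (P p) (nabla X η p)) :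
    Dop X φ p = φ p * ω p (X p) - g p (A V p) (X p) := by
  have hφp : φ p = g p (P p) (η p) := congrFun hφ p
  have htorse : g p (nabla X P p) (η p) = ω p (X p) * φ p := by
    simp [hTF, hX, hφp]
  have hshape : g p (P p) (nabla X η p) = - g p (A V p) (X p) := by
    rw [hWein, hPdec, map_neg, map_add, map_smul, LinearMap.add_apply, LinearMap.smul_apply,
      hsym (η p), hAX, hsym (V p), hAsym, hsym (X p), smul_zero, zero_add]
  rw [hφ, hcompat, htorse, hshape, hφp]
  ring

theorem lemma2_gradient_of_phi_general
    {M W : Type*} [AddCommGroup W] [Module ℝ W]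
    (g : M → W →ₗ[ℝ] W →ₗ[ℝ] ℝ)
    (nabla : (M → W) → (M → W) → (M → W))
    (Dop : (M → W) → (M → ℝ) → (M → ℝ))
    (η P V gradphi ωM : M → W) (φ μ : M → ℝ) (ω : M → W →ₗ[ℝ] ℝ)
    (A : (M → W) → (M → W))
    -- the metric is symmetric, nondegenerate, and η is a unit normal
    (hsym : ∀ p v w, g p v w = g p w v)
    (hnd : ∀ p (w : W), (∀ u : W, g p w u = 0) → w = 0)
    (hη : ∀ p, g p (η p) (η p) = 1)
    -- every tangent vector extends to a tangent vector field
    (hext : ∀ p (w : W), g p w (η p) = 0 →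
        ∃ X : M → W, (∀ q, g q (X q) (η q) = 0) ∧ X p = w)
    -- decomposition P = φ η + V with φ = ⟨P,η⟩ and V tangent
    (hφ : ∀ p, φ p = g p (P p) (η p))
    (hPdec : ∀ p, P p = φ p • η p + V p)
    -- the shape operator is tangent-valued and self-adjoint
    (hAtan : ∀ X p, g p (A X p) (η p) = 0)
    (hAsym : ∀ X Y : M → W, ∀ p, g p (A X p) (Y p) = g p (X p) (A Y p))
    -- Weingarten formula ∇̄_X η = -A(X) for X tangent to M
    (hWein : ∀ X : M → W, (∀ p, g p (X p) (η p) = 0) → ∀ p, nabla X η p = - A X p)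
    -- P is torse-forming: ∇̄_X P = μ X + ω(X) P
    (hTF : ∀ X : M → W, (∀ p, g p (X p) (η p) = 0) →
        ∀ p, nabla X P p = μ p • X p + ω p (X p) • P p)
    -- compatibility of the connection with the metric
    (hcompat : ∀ (X Y Z : M → W) (p : M),
        Dop X (fun q => g q (Y q) (Z q)) p
          = g p (nabla X Y p) (Z p) + g p (Y p) (nabla X Z p))
    -- gradphi is the gradient of φ on M: a tangent field with ⟨grad φ, X⟩ = X(φ)
    (hgradtan : ∀ p, g p (gradphi p) (η p) = 0)
    (hgrad : ∀ X : M → W, (∀ p, g p (X p) (η p) = 0) →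
        ∀ p, g p (gradphi p) (X p) = Dop X φ p)
    -- ωM is the tangential part ω♯_M of the metric dual of ω
    (hωMtan : ∀ p, g p (ωM p) (η p) = 0)
    (hωM : ∀ X : M → W, (∀ p, g p (X p) (η p) = 0) →
        ∀ p, g p (ωM p) (X p) = ω p (X p))
    (p : M) :
    gradphi p = φ p • ωM p - A V p := by
  refine LinearMap.SeparatingLeft.eq_of_agree_on_unit_and_orthogonal (hnd p) (hη p)
    ?normal fun w hw => ?tangent
  case normal => simp [hgradtan p, hωMtan p, hAtan V p]
  case tangent =>
    obtain ⟨X, hX, rfl⟩ := hext p w hw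
    rw [hgrad X hX p, dop_normalComponent_of_torseForming (hsym p) (funext hφ) (hPdec p) (hX p)
      (hAtan X p) (hAsym X V p) (hWein X hX p) (hTF X hX p) (hcompat X P η p)]
    simp [hωM X hX p]

/-- **Lemma 2.** Let `M` be a hypersurface in a Riemannian manifold `N`
admitting a torse-forming vector field `P` (`∇̄_X P = μ X + ω(X) P`) with generating
form `ω`.  With `P = φ η + V` (`φ = ⟨P,η⟩`, `V` tangent), the gradient of `φ` on `M`
satisfies `grad φ = φ ω♯_M − A(V)`, where `ω♯_M` is the tangential part of the metric
dual of `ω` and `A` is the shape operator. -/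
theorem lemma2_gradient_of_phi
    {M W : Type*} [AddCommGroup W] [Module ℝ W]
    (g : M → W →ₗ[ℝ] W →ₗ[ℝ] ℝ)
    (nabla : (M → W) → (M → W) → (M → W))
    (Dop : (M → W) → (M → ℝ) → (M → ℝ))
    (η P V gradphi ωM : M → W) (φ μ : M → ℝ) (ω : M → W →ₗ[ℝ] ℝ)
    (A : (M → W) → (M → W))
    -- the metric is symmetric, nondegenerate, and η is a unit normal
    (hsym : ∀ p v w, g p v w = g p w v)
    (hnd : ∀ p (w : W), (∀ u : W, g p w u = 0) → w = 0)
    (hη : ∀ p, g p (η p) (η p) = 1)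
    -- every tangent vector extends to a tangent vector field
    (hext : ∀ p (w : W), g p w (η p) = 0 →
        ∃ X : M → W, (∀ q, g q (X q) (η q) = 0) ∧ X p = w)
    -- decomposition P = φ η + V with φ = ⟨P,η⟩ and V tangent
    (hφ : ∀ p, φ p = g p (P p) (η p))
    (hPdec : ∀ p, P p = φ p • η p + V p)
    (hVtan : ∀ p, g p (V p) (η p) = 0)
    -- the shape operator is tangent-valued and self-adjoint
    (hAtan : ∀ X p, g p (A X p) (η p) = 0)
    (hAsym : ∀ X Y : M → W, ∀ p, g p (A X p) (Y p) = g p (X p) (A Y p))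
    -- Weingarten formula ∇̄_X η = -A(X) for X tangent to M
    (hWein : ∀ X : M → W, (∀ p, g p (X p) (η p) = 0) → ∀ p, nabla X η p = - A X p)
    -- P is torse-forming: ∇̄_X P = μ X + ω(X) P
    (hTF : ∀ X : M → W, (∀ p, g p (X p) (η p) = 0) →
        ∀ p, nabla X P p = μ p • X p + ω p (X p) • P p)
    -- compatibility of the connection with the metric
    (hcompat : ∀ (X Y Z : M → W) (p : M),
        Dop X (fun q => g q (Y q) (Z q)) p
          = g p (nabla X Y p) (Z p) + g p (Y p) (nabla X Z p))
    -- gradphi is the gradient of φ on M: a tangent field with ⟨grad φ, X⟩ = X(φ)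
    (hgradtan : ∀ p, g p (gradphi p) (η p) = 0)
    (hgrad : ∀ X : M → W, (∀ p, g p (X p) (η p) = 0) →
        ∀ p, g p (gradphi p) (X p) = Dop X φ p)
    -- ωM is the tangential part ω♯_M of the metric dual of ω
    (hωMtan : ∀ p, g p (ωM p) (η p) = 0)
    (hωM : ∀ X : M → W, (∀ p, g p (X p) (η p) = 0) →
        ∀ p, g p (ωM p) (X p) = ω p (X p))
    (p : M) :
    gradphi p = φ p • ωM p - A V p :=
  lemma2_gradient_of_phi_general g nabla Dop η P V gradphi ωM φ μ ω A hsym hnd hη hext hφ hPdec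
    hAtan hAsym hWein hTF hcompat hgradtan hgrad hωMtan hωM p
end

section
/- Let M be a biharmonic hypersurface in a Riemannian manifold N carrying a torse-forming vector field P, set θ = P♭, and assume N is θ-Einstein: Ric = a⟨,⟩ + b θ⊗θ for functions a,b on N. If on some open subset U ⊆ M both b ≠ 0 and φ|V|² ≠ 0 (where P = φη + V), then the mean curvature f vanishes on U. -/
theorem einstein_apply_normal_tangent {W : Type*} [AddCommGroup W] [Module ℝ W]
    (B Ric : W →ₗ[ℝ] W →ₗ[ℝ] ℝ) {η P V : W} {φ a b : ℝ}
    (hsym : ∀ v w, B v w = B w v)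
    (hRic : ∀ v w, Ric v w = a * B v w + b * B v P * B w P)
    (hφ : φ = B P η) (hP : P = φ • η + V) (hVη : B V η = 0) :
    Ric η V = b * (φ * B V V) := by
  have hηP : B η P = φ := by rw [hφ, hsym]
  have hVP : B V P = B V V := by simp [hP, hVη]
  rw [hRic, hsym η V, hVη, hηP, hVP]
  ring

theorem corollary_f_vanishes_on_U_general
    {M W : Type*} [AddCommGroup W] [Module ℝ W]
    (g : M → W →ₗ[ℝ] W →ₗ[ℝ] ℝ)
    (Ric : M → W →ₗ[ℝ] W →ₗ[ℝ] ℝ)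
    (η P V : M → W) (φ f a b : M → ℝ)
    (hsym : ∀ p v w, g p v w = g p w v)
    (hφ : ∀ p, φ p = g p (P p) (η p))
    (hPdec : ∀ p, P p = φ p • η p + V p)
    (hVtan : ∀ p, g p (V p) (η p) = 0)
    -- N is θ-Einstein with θ = P♭, i.e. θ(X) = ⟨X,P⟩
    (hEin : ∀ p (v w : W), Ric p v w
        = a p * g p v w + b p * (g p v (P p)) * (g p w (P p)))
    -- M is biharmonic: by Theorem 1 of the paper, f · Ric(η,V) = 0
    (hbih : ∀ p, f p * Ric p (η p) (V p) = 0)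
    (U : Set M)
    (hb : ∀ p ∈ U, b p ≠ 0)
    (hφV : ∀ p ∈ U, φ p * g p (V p) (V p) ≠ 0) :
    ∀ p ∈ U, f p = 0 := by
  intro p hp
  have hRic : Ric p (η p) (V p) = b p * (φ p * g p (V p) (V p)) :=
    einstein_apply_normal_tangent (g p) (Ric p) (hsym p) (hEin p) (hφ p) (hPdec p) (hVtan p)
  have hbih_p := hbih p
  rw [hRic] at hbih_p
  exact (mul_eq_zero.1 hbih_p).resolve_right (mul_ne_zero (hb p hp) (hφV p hp))

/-- **Corollary.** Let `M` be a biharmonic hypersurface in a Riemannian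
manifold `N` carrying a torse-forming vector field `P`, set `θ = P♭`, and assume `N` is
`θ`-Einstein: `Ric = a⟨,⟩ + b θ⊗θ`.  If on some open subset `U ⊆ M` both `b ≠ 0` and
`φ|V|² ≠ 0` (where `P = φη + V`), then the mean curvature `f` vanishes on `U`.
Biharmonicity enters through Theorem 1 of the paper: `f · Ric(η,V) = 0` on `M`. -/
theorem corollary_f_vanishes_on_U
    {M W : Type*} [TopologicalSpace M] [AddCommGroup W] [Module ℝ W]
    (g : M → W →ₗ[ℝ] W →ₗ[ℝ] ℝ)
    (Ric : M → W →ₗ[ℝ] W →ₗ[ℝ] ℝ)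
    (η P V : M → W) (φ f a b : M → ℝ)
    (hsym : ∀ p v w, g p v w = g p w v)
    (hη : ∀ p, g p (η p) (η p) = 1)
    (hφ : ∀ p, φ p = g p (P p) (η p))
    (hPdec : ∀ p, P p = φ p • η p + V p)
    (hVtan : ∀ p, g p (V p) (η p) = 0)
    -- N is θ-Einstein with θ = P♭, i.e. θ(X) = ⟨X,P⟩
    (hEin : ∀ p (v w : W), Ric p v w
        = a p * g p v w + b p * (g p v (P p)) * (g p w (P p)))
    -- M is biharmonic: by Theorem 1 of the paper, f · Ric(η,V) = 0
    (hbih : ∀ p, f p * Ric p (η p) (V p) = 0)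
    (U : Set M) (hUopen : IsOpen U)
    (hb : ∀ p ∈ U, b p ≠ 0)
    (hφV : ∀ p ∈ U, φ p * g p (V p) (V p) ≠ 0) :
    ∀ p ∈ U, f p = 0 :=
  corollary_f_vanishes_on_U_general g Ric η P V φ f a b hsym hφ hPdec hVtan hEin hbih U hb hφV
end

section
/- Let M be a hypersurface in a Riemannian manifold N admitting a torse-forming vector field P = φη + V with generating form ω. Then ⟨∇̄_{ω♯_M} H, P⟩ = φ ω(grad f) − f ω(A(V)), where H = fη is the mean curvature vector, A the shape operator, and ω♯_M the tangential dual of ω. -/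
/-!
Metric compatibility gives `⟨∇̄_{ω♯} H, P⟩ = ω♯⟨H, P⟩ − ⟨H, ∇̄_{ω♯} P⟩` with `⟨H, P⟩ = f φ`.
Differentiating along `ω♯` pairs a gradient with `ω♯`, i.e. applies `ω` to it, so by Lemma 2
`ω♯(f φ) = φ ω(grad f) + f (φ ω(ω♯) − ω(A V))`; the torse-forming equation gives
`⟨H, ∇̄_{ω♯} P⟩ = f φ ω(ω♯)`, which cancels the middle term.
-/

section Hypersurface

variable {M W : Type*} [AddCommGroup W] [Module ℝ W] (g : M → W →ₗ[ℝ] W →ₗ[ℝ] ℝ) (η : M → W)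

def IsTangent (X : M → W) : Prop := ∀ p, g p (X p) (η p) = 0

variable {g η}

theorem inner_smul_normal_eq {P : M → W} {φ : M → ℝ} (hsym : ∀ p v w, g p v w = g p w v)
    (hφ : ∀ p, φ p = g p (P p) (η p)) (c : ℝ) (p : M) :
    g p (c • η p) (P p) = c * φ p := by
  rw [map_smul, LinearMap.smul_apply, hsym, hφ, smul_eq_mul]

theorem dop_eq_apply_grad {Dop : (M → W) → (M → ℝ) → (M → ℝ)} {u : M → ℝ}
    {G ωM : M → W} {ω : M → W →ₗ[ℝ] ℝ} (hsym : ∀ p v w, g p v w = g p w v)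
    (hGtan : IsTangent g η G) (hG : ∀ X, IsTangent g η X → ∀ p, g p (G p) (X p) = Dop X u p)
    (hωMtan : IsTangent g η ωM) (hωM : ∀ X, IsTangent g η X → ∀ p, g p (ωM p) (X p) = ω p (X p))
    (p : M) :
    Dop ωM u p = ω p (G p) := by
  rw [← hG ωM hωMtan p, hsym, hωM G hGtan p]

theorem inner_smul_normal_nabla_torseForming {nabla : (M → W) → (M → W) → (M → W)}
    {P X : M → W} {φ μ : M → ℝ} {ω : M → W →ₗ[ℝ] ℝ}
    (hsym : ∀ p v w, g p v w = g p w v) (hφ : ∀ p, φ p = g p (P p) (η p))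
    (hTF : ∀ X : M → W, IsTangent g η X → ∀ p, nabla X P p = μ p • X p + ω p (X p) • P p)
    (hX : IsTangent g η X) (c : ℝ) (p : M) :
    g p (c • η p) (nabla X P p) = ω p (X p) * (c * φ p) := by
  have hηX : g p (η p) (X p) = 0 := by rw [hsym]; exact hX p
  rw [hTF X hX p, map_add, map_smul (g p (c • η p)) (μ p), map_smul (g p (c • η p)) (ω p (X p)),
    inner_smul_normal_eq hsym hφ, map_smul, LinearMap.smul_apply, hηX, smul_zero, smul_zero,
    zero_add, smul_eq_mul]

end Hypersurface

theorem bracket_nabla_omega_sharp_H_P_general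
    {M W : Type*} [AddCommGroup W] [Module ℝ W]
    (g : M → W →ₗ[ℝ] W →ₗ[ℝ] ℝ)
    (nabla : (M → W) → (M → W) → (M → W))
    (Dop : (M → W) → (M → ℝ) → (M → ℝ))
    (η P V gradphi gradf ωM H : M → W) (φ μ f : M → ℝ) (ω : M → W →ₗ[ℝ] ℝ)
    (A : (M → W) → (M → W))
    -- the metric is symmetric and η is a unit normal
    (hsym : ∀ p v w, g p v w = g p w v)
    -- decomposition P = φ η + V with φ = ⟨P,η⟩ and V tangent
    (hφ : ∀ p, φ p = g p (P p) (η p))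
    -- H = f η is the mean curvature vector field
    (hH : ∀ p, H p = f p • η p)
    -- P is torse-forming: ∇̄_X P = μ X + ω(X) P
    (hTF : ∀ X : M → W, (∀ p, g p (X p) (η p) = 0) →
        ∀ p, nabla X P p = μ p • X p + ω p (X p) • P p)
    -- compatibility of the connection with the metric
    (hcompat : ∀ (X Y Z : M → W) (p : M),
        Dop X (fun q => g q (Y q) (Z q)) p
          = g p (nabla X Y p) (Z p) + g p (Y p) (nabla X Z p))
    -- Leibniz rule for the directional derivative on products of functions
    (hDmul : ∀ (X : M → W) (a b : M → ℝ) (p : M),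
        Dop X (fun q => a q * b q) p = Dop X a p * b p + a p * Dop X b p)
    -- gradf, gradphi are the gradients on M of f and φ
    (hgradftan : ∀ p, g p (gradf p) (η p) = 0)
    (hgradf : ∀ X : M → W, (∀ p, g p (X p) (η p) = 0) →
        ∀ p, g p (gradf p) (X p) = Dop X f p)
    (hgradphitan : ∀ p, g p (gradphi p) (η p) = 0)
    (hgradphi : ∀ X : M → W, (∀ p, g p (X p) (η p) = 0) →
        ∀ p, g p (gradphi p) (X p) = Dop X φ p)
    -- ωM is the tangential dual ω♯_M of ω
    (hωMtan : ∀ p, g p (ωM p) (η p) = 0)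
    (hωM : ∀ X : M → W, (∀ p, g p (X p) (η p) = 0) →
        ∀ p, g p (ωM p) (X p) = ω p (X p))
    -- Lemma 2 of the paper: grad φ = φ ω♯_M − A(V)
    (hL2 : ∀ p, gradphi p = φ p • ωM p - A V p)
    (p : M) :
    g p (nabla ωM H p) (P p) = φ p * ω p (gradf p) - f p * ω p (A V p) := by
  have hHP : (fun q => g q (H q) (P q)) = fun q => f q * φ q :=
    funext fun q => by rw [hH, inner_smul_normal_eq hsym hφ]
  have hDf : Dop ωM f p = ω p (gradf p) :=
    dop_eq_apply_grad hsym hgradftan hgradf hωMtan hωM p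
  have hDφ : Dop ωM φ p = φ p * ω p (ωM p) - ω p (A V p) := by
    rw [dop_eq_apply_grad hsym hgradphitan hgradphi hωMtan hωM p, hL2, map_sub, map_smul,
      smul_eq_mul]
  have hHnablaP : g p (H p) (nabla ωM P p) = ω p (ωM p) * (f p * φ p) := by
    rw [hH]
    exact inner_smul_normal_nabla_torseForming hsym hφ hTF hωMtan (f p) p
  have hcompatHP := hcompat ωM H P p
  rw [hHP, hDmul, hDf, hDφ, hHnablaP] at hcompatHP
  linear_combination -hcompatHP

/-- Let `M` be a hypersurface in a Riemannian manifold `N` admitting a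
torse-forming vector field `P = φ η + V` with generating form `ω`.  Then
`⟨∇̄_{ω♯_M} H, P⟩ = φ ω(grad f) − f ω(A(V))`, where `H = f η` is the mean curvature
vector, `A` the shape operator and `ω♯_M` the tangential dual of `ω`. -/
theorem bracket_nabla_omega_sharp_H_P
    {M W : Type*} [AddCommGroup W] [Module ℝ W]
    (g : M → W →ₗ[ℝ] W →ₗ[ℝ] ℝ)
    (nabla : (M → W) → (M → W) → (M → W))
    (Dop : (M → W) → (M → ℝ) → (M → ℝ))
    (η P V gradphi gradf ωM H : M → W) (φ μ f : M → ℝ) (ω : M → W →ₗ[ℝ] ℝ)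
    (A : (M → W) → (M → W))
    -- the metric is symmetric and η is a unit normal
    (hsym : ∀ p v w, g p v w = g p w v)
    (hη : ∀ p, g p (η p) (η p) = 1)
    -- decomposition P = φ η + V with φ = ⟨P,η⟩ and V tangent
    (hφ : ∀ p, φ p = g p (P p) (η p))
    (hPdec : ∀ p, P p = φ p • η p + V p)
    (hVtan : ∀ p, g p (V p) (η p) = 0)
    -- H = f η is the mean curvature vector field
    (hH : ∀ p, H p = f p • η p)
    -- the shape operator is tangent-valued and self-adjoint
    (hAtan : ∀ X p, g p (A X p) (η p) = 0)
    (hAsym : ∀ X Y : M → W, ∀ p, g p (A X p) (Y p) = g p (X p) (A Y p))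
    -- P is torse-forming: ∇̄_X P = μ X + ω(X) P
    (hTF : ∀ X : M → W, (∀ p, g p (X p) (η p) = 0) →
        ∀ p, nabla X P p = μ p • X p + ω p (X p) • P p)
    -- compatibility of the connection with the metric
    (hcompat : ∀ (X Y Z : M → W) (p : M),
        Dop X (fun q => g q (Y q) (Z q)) p
          = g p (nabla X Y p) (Z p) + g p (Y p) (nabla X Z p))
    -- Leibniz rule for the directional derivative on products of functions
    (hDmul : ∀ (X : M → W) (a b : M → ℝ) (p : M),
        Dop X (fun q => a q * b q) p = Dop X a p * b p + a p * Dop X b p)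
    -- gradf, gradphi are the gradients on M of f and φ
    (hgradftan : ∀ p, g p (gradf p) (η p) = 0)
    (hgradf : ∀ X : M → W, (∀ p, g p (X p) (η p) = 0) →
        ∀ p, g p (gradf p) (X p) = Dop X f p)
    (hgradphitan : ∀ p, g p (gradphi p) (η p) = 0)
    (hgradphi : ∀ X : M → W, (∀ p, g p (X p) (η p) = 0) →
        ∀ p, g p (gradphi p) (X p) = Dop X φ p)
    -- ωM is the tangential dual ω♯_M of ω
    (hωMtan : ∀ p, g p (ωM p) (η p) = 0)
    (hωM : ∀ X : M → W, (∀ p, g p (X p) (η p) = 0) →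
        ∀ p, g p (ωM p) (X p) = ω p (X p))
    -- Lemma 2 of the paper: grad φ = φ ω♯_M − A(V)
    (hL2 : ∀ p, gradphi p = φ p • ωM p - A V p)
    (p : M) :
    g p (nabla ωM H p) (P p) = φ p * ω p (gradf p) - f p * ω p (A V p) :=
  bracket_nabla_omega_sharp_H_P_general g nabla Dop η P V gradphi gradf ωM H φ μ f ω A hsym hφ hH
    hTF hcompat hDmul hgradftan hgradf hgradphitan hgradphi hωMtan hωM hL2 p
end
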